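/- Concatenation property (two nodes, deterministic core lemma): Let a flow traverse node 1 then node 2, with a = a¹, d¹ = a², d = d². Then for all n ≥ 0, sup_{0≤m≤n} [ d(m) − (a ⊗̄ γ¹ ⊗̄ γ²)(m) ] ≤ sup_{0≤k≤n} [ d¹(k) − (a¹ ⊗̄ γ¹)(k) ] + sup_{0≤m≤n} [ d²(m) − (a² ⊗̄ γ²)(m) ]. Consequently, if node i provides a c.s stochastic service curve γⁱ with bounding function jⁱ ∈ Ḡ (i = 1, 2), the tandem network provides a c.s stochastic service curve γ¹ ⊗̄ γ² with bounding function j¹ ⊗ j². -/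

import Mathlib

/-!
Pick `k ≤ m` attaining the max-plus convolution `(d¹ ⊗̄ γ²)(m) = d¹(k) + γ²(m - k)`. By
associativity, `(a ⊗̄ γ¹ ⊗̄ γ²)(m) ≥ (a ⊗̄ γ¹)(k) + γ²(m - k)`, so the deficit of node 2 at `m`
plus that of node 1 at `k` dominates the end-to-end deficit at `m`. The tail bound then follows
from `{X > x} ⊆ {Y > y} ∪ {Z > x - y}` whenever `X ≤ Y + Z`, optimised over `y ∈ [0, x]`.
-/

open MeasureTheory

/-- Max-plus convolution of two sequences. -/
noncomputable def maxplus (f g : ℕ → ℝ) (n : ℕ) : ℝ :=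
  (Finset.Iic n).sup' Finset.nonempty_Iic (fun m => f m + g (n - m))

/-- Min-plus convolution of two real functions. -/
noncomputable def minplus (f g : ℝ → ℝ) (z : ℝ) : ℝ :=
  ⨅ y : Set.Icc (0 : ℝ) z, (f y.1 + g (z - y.1))

theorem le_maxplus (f g : ℕ → ℝ) {m n : ℕ} (h : m ≤ n) : f m + g (n - m) ≤ maxplus f g n :=
  Finset.le_sup' (fun i => f i + g (n - i)) (Finset.mem_Iic.mpr h)

theorem maxplus_le {f g : ℕ → ℝ} {n : ℕ} {c : ℝ} (h : ∀ m ≤ n, f m + g (n - m) ≤ c) :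
    maxplus f g n ≤ c :=
  Finset.sup'_le _ _ fun m hm => h m (Finset.mem_Iic.mp hm)

theorem exists_maxplus_eq (f g : ℕ → ℝ) (n : ℕ) :
    ∃ m ≤ n, maxplus f g n = f m + g (n - m) := by
  obtain ⟨m, hm, h⟩ := Finset.exists_mem_eq_sup' (Finset.nonempty_Iic (a := n))
    (fun i => f i + g (n - i))
  exact ⟨m, Finset.mem_Iic.mp hm, h⟩

theorem maxplus_assoc (f g h : ℕ → ℝ) :
    maxplus (maxplus f g) h = maxplus f (maxplus g h) := by
  funext n
  apply le_antisymm
  · refine maxplus_le fun k hk => ?_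
    suffices maxplus f g k ≤ maxplus f (maxplus g h) n - h (n - k) by linarith
    refine maxplus_le fun j hj => ?_
    have hg : g (k - j) + h (n - k) ≤ maxplus g h (n - j) := by
      simpa [show n - j - (k - j) = n - k by omega] using
        le_maxplus g h (show k - j ≤ n - j by omega)
    linarith [le_maxplus f (maxplus g h) (show j ≤ n by omega)]
  · refine maxplus_le fun j hj => ?_
    suffices maxplus g h (n - j) ≤ maxplus (maxplus f g) h n - f j by linarith
    refine maxplus_le fun i hi => ?_
    have hf : f j + g i ≤ maxplus f g (j + i) := by
      simpa using le_maxplus f g (show j ≤ j + i by omega)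
    have := le_maxplus (maxplus f g) h (show j + i ≤ n by omega)
    rw [show n - (j + i) = n - j - i by omega] at this
    linarith

theorem le_minplus {f g : ℝ → ℝ} {x c : ℝ} (hx : 0 ≤ x)
    (h : ∀ y, 0 ≤ y → y ≤ x → c ≤ f y + g (x - y)) : c ≤ minplus f g x := by
  have : Nonempty (Set.Icc (0 : ℝ) x) := ⟨⟨0, le_rfl, hx⟩⟩
  exact le_ciInf fun y => h y.1 y.2.1 y.2.2

noncomputable def serviceDeficit (d a γ : ℕ → ℝ) (n : ℕ) : ℝ :=
  (Finset.Iic n).sup' Finset.nonempty_Iic (fun m => d m - maxplus a γ m)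

theorem sub_maxplus_le_serviceDeficit (d a γ : ℕ → ℝ) {m n : ℕ} (h : m ≤ n) :
    d m - maxplus a γ m ≤ serviceDeficit d a γ n :=
  Finset.le_sup' (fun i => d i - maxplus a γ i) (Finset.mem_Iic.mpr h)

theorem serviceDeficit_concat_le (a d₁ d₂ γ₁ γ₂ : ℕ → ℝ) (n : ℕ) :
    serviceDeficit d₂ a (maxplus γ₁ γ₂) n
      ≤ serviceDeficit d₁ a γ₁ n + serviceDeficit d₂ d₁ γ₂ n := by
  refine Finset.sup'_le _ _ fun m hm => ?_
  have hmn := Finset.mem_Iic.mp hm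
  obtain ⟨k, hkm, hk⟩ := exists_maxplus_eq d₁ γ₂ m
  have h₁ := sub_maxplus_le_serviceDeficit d₁ a γ₁ (hkm.trans hmn)
  have h₂ := sub_maxplus_le_serviceDeficit d₂ d₁ γ₂ hmn
  have h₃ := le_maxplus (maxplus a γ₁) γ₂ hkm
  rw [maxplus_assoc] at h₃
  linarith

theorem measureReal_gt_le_add_of_le_add {Ω : Type*} [MeasurableSpace Ω] (μ : Measure Ω)
    [IsFiniteMeasure μ] {X Y Z : Ω → ℝ} (h : ∀ ω, X ω ≤ Y ω + Z ω) (x y : ℝ) :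
    μ.real {ω | X ω > x} ≤ μ.real {ω | Y ω > y} + μ.real {ω | Z ω > x - y} := by
  have hsub : {ω | X ω > x} ⊆ {ω | Y ω > y} ∪ {ω | Z ω > x - y} := by
    intro ω hω
    by_contra hc
    simp only [Set.mem_union, Set.mem_ofPred_eq, not_or, not_lt] at hω hc
    linarith [h ω]
  exact (measureReal_mono hsub).trans (measureReal_union_le _ _)

theorem stmt_18_general {Ω : Type*} [MeasurableSpace Ω] (P : Measure Ω)
    [IsProbabilityMeasure P]
    (a d1 d2 : ℕ → Ω → ℝ)
    (γ1 γ2 : ℕ → ℝ)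
    (j1 j2 : ℝ → ℝ)
    (hcs1 : ∀ n : ℕ, ∀ x : ℝ, 0 ≤ x →
      (P {ω | (Finset.Iic n).sup' Finset.nonempty_Iic
          (fun m => d1 m ω - maxplus (fun k => a k ω) γ1 m) > x}).toReal ≤ j1 x)
    (hcs2 : ∀ n : ℕ, ∀ x : ℝ, 0 ≤ x →
      (P {ω | (Finset.Iic n).sup' Finset.nonempty_Iic
          (fun m => d2 m ω - maxplus (fun k => d1 k ω) γ2 m) > x}).toReal
        ≤ j2 x) :
    (∀ ω : Ω, ∀ n : ℕ,
      (Finset.Iic n).sup' Finset.nonempty_Iic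
          (fun m => d2 m ω - maxplus (fun k => a k ω) (maxplus γ1 γ2) m)
        ≤ (Finset.Iic n).sup' Finset.nonempty_Iic
            (fun k => d1 k ω - maxplus (fun i => a i ω) γ1 k)
          + (Finset.Iic n).sup' Finset.nonempty_Iic
              (fun m => d2 m ω - maxplus (fun k => d1 k ω) γ2 m)) ∧
    (∀ n : ℕ, ∀ x : ℝ, 0 ≤ x →
      (P {ω | (Finset.Iic n).sup' Finset.nonempty_Iic
          (fun m => d2 m ω - maxplus (fun k => a k ω) (maxplus γ1 γ2) m)
            > x}).toReal
        ≤ minplus j1 j2 x) := by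
  have concat : ∀ ω n, serviceDeficit (d2 · ω) (a · ω) (maxplus γ1 γ2) n
      ≤ serviceDeficit (d1 · ω) (a · ω) γ1 n + serviceDeficit (d2 · ω) (d1 · ω) γ2 n :=
    fun ω => serviceDeficit_concat_le (a · ω) (d1 · ω) (d2 · ω) γ1 γ2
  refine ⟨concat, fun n x hx => le_minplus hx fun y hy hyx => ?_⟩
  exact (measureReal_gt_le_add_of_le_add P (fun ω => concat ω n) x y).trans
    (add_le_add (hcs1 n y hy) (hcs2 n (x - y) (sub_nonneg.mpr hyx)))

theorem stmt_18 {Ω : Type*} [MeasurableSpace Ω] (P : Measure Ω)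
    [IsProbabilityMeasure P]
    (a d1 d2 : ℕ → Ω → ℝ)
    (ha_meas : ∀ n, Measurable (a n)) (hd1_meas : ∀ n, Measurable (d1 n))
    (hd2_meas : ∀ n, Measurable (d2 n))
    (ha_mono : ∀ ω, Monotone fun n => a n ω)
    (hd1_mono : ∀ ω, Monotone fun n => d1 n ω)
    (hd2_mono : ∀ ω, Monotone fun n => d2 n ω)
    (had1 : ∀ n ω, a n ω ≤ d1 n ω) (hd1d2 : ∀ n ω, d1 n ω ≤ d2 n ω)
    (γ1 γ2 : ℕ → ℝ) (hγ1_mono : Monotone γ1) (hγ1_nonneg : ∀ n, 0 ≤ γ1 n)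
    (hγ2_mono : Monotone γ2) (hγ2_nonneg : ∀ n, 0 ≤ γ2 n)
    (j1 j2 : ℝ → ℝ) (hj1_anti : Antitone j1) (hj1_nonneg : ∀ x, 0 ≤ j1 x)
    (hj2_anti : Antitone j2) (hj2_nonneg : ∀ x, 0 ≤ j2 x)
    (hcs1 : ∀ n : ℕ, ∀ x : ℝ, 0 ≤ x →
      (P {ω | (Finset.Iic n).sup' Finset.nonempty_Iic
          (fun m => d1 m ω - maxplus (fun k => a k ω) γ1 m) > x}).toReal ≤ j1 x)
    (hcs2 : ∀ n : ℕ, ∀ x : ℝ, 0 ≤ x →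
      (P {ω | (Finset.Iic n).sup' Finset.nonempty_Iic
          (fun m => d2 m ω - maxplus (fun k => d1 k ω) γ2 m) > x}).toReal
        ≤ j2 x) :
    (∀ ω : Ω, ∀ n : ℕ,
      (Finset.Iic n).sup' Finset.nonempty_Iic
          (fun m => d2 m ω - maxplus (fun k => a k ω) (maxplus γ1 γ2) m)
        ≤ (Finset.Iic n).sup' Finset.nonempty_Iic
            (fun k => d1 k ω - maxplus (fun i => a i ω) γ1 k)
          + (Finset.Iic n).sup' Finset.nonempty_Iic
              (fun m => d2 m ω - maxplus (fun k => d1 k ω) γ2 m)) ∧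
    (∀ n : ℕ, ∀ x : ℝ, 0 ≤ x →
      (P {ω | (Finset.Iic n).sup' Finset.nonempty_Iic
          (fun m => d2 m ω - maxplus (fun k => a k ω) (maxplus γ1 γ2) m)
            > x}).toReal
        ≤ minplus j1 j2 x) :=
  stmt_18_general P a d1 d2 γ1 γ2 j1 j2 hcs1 hcs2
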